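/- arXiv:1811.06793 — 4 statements merged into one kernel-verified Lean document; each statement's English description precedes it below -/
import Mathlib

section
/- Let X be a discrete random variable taking values a₁, …, a_d with probabilities p₁, …, p_d, all p_j > 0, d ≥ 2. Set b_j = a_j − a₁ and d(s) = max_{j ∈ {2,…,d}} dist(b_j s, 2πℤ). Then there exists a constant c > 0, depending only on p₁, …, p_d, such that |E[e^{isX}]| ≤ 1 − c · d(s)² for all s ∈ ℝ. -/
/-!
Only two atoms matter: `0` and an atom `k ≠ 0` at which the maximum `d(s)` is attained. Bounding
every other term by its weight gives `|E e^{isX}| ≤ 1 - (p₀ + p_k) + |p₀ + p_k e^{i b_k s}|`, and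
`|P + Q e^{iθ}|² = (P + Q)² - 2PQ(1 - cos θ)` with `1 - cos θ ≥ 2 δ² / π²`, `δ = dist(θ, 2πℤ)`.
Hence one may take `c = min_{k ≠ 0} 2 p₀ p_k / (π² (p₀ + p_k))`.
-/

open Real

/-- The representative of `θ` modulo `2π` in `[-π, π]`; its absolute value is `dist(θ, 2πℤ)`. -/
noncomputable def centerModTwoPi (θ : ℝ) : ℝ := θ - 2 * π * round (θ / (2 * π))

lemma abs_centerModTwoPi_le (θ : ℝ) : |centerModTwoPi θ| ≤ π := by
  have h2π : 0 < 2 * π := by positivity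
  have h : centerModTwoPi θ = (θ / (2 * π) - round (θ / (2 * π))) * (2 * π) := by
    rw [centerModTwoPi]; field_simp
  rw [h, abs_mul, abs_of_pos h2π]
  nlinarith [abs_sub_round (θ / (2 * π))]

lemma cos_centerModTwoPi (θ : ℝ) : cos (centerModTwoPi θ) = cos θ := by
  rw [centerModTwoPi, mul_comm (2 * π), cos_sub_int_mul_two_pi]

lemma mul_sq_centerModTwoPi_le_one_sub_cos (θ : ℝ) :
    2 / π ^ 2 * centerModTwoPi θ ^ 2 ≤ 1 - cos θ := by
  have := cos_le_one_sub_mul_cos_sq (abs_centerModTwoPi_le θ)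
  rw [cos_centerModTwoPi] at this
  linarith

lemma norm_add_mul_exp_sq (P Q θ : ℝ) :
    ‖(P : ℂ) + Q * Complex.exp (θ * Complex.I)‖ ^ 2 = (P + Q) ^ 2 - 2 * P * Q * (1 - cos θ) := by
  have h : (P : ℂ) + Q * Complex.exp (θ * Complex.I) =
      ↑(P + Q * cos θ) + ↑(Q * sin θ) * Complex.I := by
    rw [Complex.exp_mul_I, ← Complex.ofReal_cos, ← Complex.ofReal_sin]
    push_cast; ring
  rw [h, Complex.sq_norm, Complex.normSq_add_mul_I]
  linear_combination Q ^ 2 * sin_sq_add_cos_sq θ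

lemma norm_add_mul_exp_le {P Q : ℝ} (hP : 0 < P) (hQ : 0 < Q) (θ : ℝ) :
    ‖(P : ℂ) + Q * Complex.exp (θ * Complex.I)‖ ≤
      P + Q - 2 * P * Q / (π ^ 2 * (P + Q)) * centerModTwoPi θ ^ 2 := by
  set δ := centerModTwoPi θ
  set E := 2 * P * Q / (π ^ 2 * (P + Q)) * δ ^ 2
  have hδ : δ ^ 2 ≤ π ^ 2 := sq_le_sq.2 (by rw [abs_of_pos pi_pos]; exact abs_centerModTwoPi_le θ)
  -- `E ≤ 2PQ/(P+Q) ≤ (P+Q)/2`, so the right-hand side stays nonnegative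
  have hE : E ≤ (P + Q) / 2 := by
    rw [show E = 2 * P * Q * δ ^ 2 / (π ^ 2 * (P + Q)) by ring,
      div_le_div_iff₀ (by positivity) (by norm_num)]
    nlinarith [mul_nonneg (mul_nonneg hP.le hQ.le) (sub_nonneg.2 hδ),
      mul_nonneg (sq_nonneg π) (sq_nonneg (P - Q))]
  have h2E : 2 * (P + Q) * E = 2 * P * Q * (2 / π ^ 2 * δ ^ 2) := by
    simp only [E]; field_simp
  refine le_of_sq_le_sq ?_ (by linarith)
  rw [norm_add_mul_exp_sq]
  nlinarith [mul_sq_centerModTwoPi_le_one_sub_cos θ, mul_pos hP hQ, sq_nonneg E]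

lemma norm_mul_exp_add_mul_exp_le {P Q : ℝ} (hP : 0 < P) (hQ : 0 < Q) (α β : ℝ) :
    ‖P * Complex.exp (α * Complex.I) + Q * Complex.exp (β * Complex.I)‖ ≤
      P + Q - 2 * P * Q / (π ^ 2 * (P + Q)) * centerModTwoPi (β - α) ^ 2 := by
  have h : (P : ℂ) * Complex.exp (α * Complex.I) + Q * Complex.exp (β * Complex.I) =
      Complex.exp (α * Complex.I) * (P + Q * Complex.exp ((β - α : ℝ) * Complex.I)) := by
    rw [mul_add, mul_left_comm, ← Complex.exp_add, Complex.ofReal_sub, ← add_mul, add_sub_cancel]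
    ring
  rw [h, norm_mul, Complex.norm_exp_ofReal_mul_I, one_mul]
  exact norm_add_mul_exp_le hP hQ _

lemma norm_sum_le_sum_sub_add_norm_pair {ι : Type*} [Fintype ι] [DecidableEq ι]
    {p : ι → ℝ} {z : ι → ℂ} (hp : ∀ j, 0 ≤ p j) (hz : ∀ j, ‖z j‖ ≤ 1) {i k : ι} (hik : i ≠ k) :
    ‖∑ j, p j * z j‖ ≤ ∑ j, p j - (p i + p k) + ‖p i * z i + p k * z k‖ := by
  have hpair : ({i, k} : Finset ι) ⊆ Finset.univ := Finset.subset_univ _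
  rw [← Finset.sum_sdiff hpair, ← Finset.sum_sdiff hpair (f := p), Finset.sum_pair hik,
    Finset.sum_pair hik, add_sub_cancel_right]
  refine (norm_add_le _ _).trans (add_le_add_left ?_ _)
  refine (norm_sum_le _ _).trans (Finset.sum_le_sum fun j _ => ?_)
  rw [norm_mul, Complex.norm_real, Real.norm_of_nonneg (hp j)]
  exact mul_le_of_le_one_right (hp j) (hz j)

/-- for a discrete random variable with `d ≥ 2` atoms `a j` of positive
probabilities `p j`, with `b j = a j - a 0` and
`D s = max_{j ≠ 0} dist(b j * s, 2πℤ)`, there is `c > 0` (depending only on the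
probabilities) with `|E e^{isX}| ≤ 1 - c * D(s)²` for all `s`. -/
theorem stmt4 (d : ℕ) (a : Fin (d + 2) → ℝ) (p : Fin (d + 2) → ℝ)
    (hp : ∀ j, 0 < p j) (hsum : ∑ j, p j = 1) :
    ∃ c > 0, ∀ s : ℝ,
      ‖∑ j, (p j : ℂ) * Complex.exp (Complex.I * ((a j * s : ℝ) : ℂ))‖ ≤
        1 - c * (⨆ j : {j : Fin (d + 2) // j ≠ 0},
            |(a j.1 - a 0) * s -
              2 * Real.pi * (round ((a j.1 - a 0) * s / (2 * Real.pi)) : ℝ)|) ^ 2 := by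
  have : Nonempty {j : Fin (d + 2) // j ≠ 0} := ⟨⟨1, by simp⟩⟩
  set g : Fin (d + 2) → ℝ := fun j => 2 * p 0 * p j / (π ^ 2 * (p 0 + p j))
  set c := Finset.univ.inf' Finset.univ_nonempty fun j : {j : Fin (d + 2) // j ≠ 0} => g j
  have hc : 0 < c := (Finset.lt_inf'_iff _).2 fun j _ => by have := hp 0; have := hp j; positivity
  refine ⟨c, hc, fun s => ?_⟩
  obtain ⟨k, hk⟩ := exists_eq_ciSup_of_finite
    (f := fun j : {j : Fin (d + 2) // j ≠ 0} => |centerModTwoPi ((a j - a 0) * s)|)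
  change _ ≤ 1 - c * (⨆ j : {j : Fin (d + 2) // j ≠ 0}, |centerModTwoPi ((a j - a 0) * s)|) ^ 2
  rw [← hk, sq_abs]
  set δ := centerModTwoPi ((a k - a 0) * s)
  have hsplit := norm_sum_le_sum_sub_add_norm_pair (fun j => (hp j).le)
    (fun j => (Complex.norm_exp_ofReal_mul_I (a j * s)).le) (Ne.symm k.2)
  have hpair := norm_mul_exp_add_mul_exp_le (hp 0) (hp k) (a 0 * s) (a k * s)
  rw [← sub_mul] at hpair
  simp only [mul_comm Complex.I]
  calc _ ≤ 1 - g k * δ ^ 2 := by rw [hsum] at hsplit; linarith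
    _ ≤ 1 - c * δ ^ 2 := by gcongr; exact Finset.inf'_le _ (Finset.mem_univ k)
end

section
/- Let f : ℝ → ℝ be continuously differentiable with f, f', and x·f(x) integrable, and f' (left) exponential of order α. Fix 0 < θ < α. Then the functions e^{−θx} f(x), (e^{−θx} f(x))', and x e^{−θx} f(x) are all absolutely integrable on ℝ. -/
/-!
Writing `f x = ∫ t in Iic x, f' t`, the bound `f' = O(e^{αx})` at `-∞` passes to `f`, and then
`x f x = O(e^{βx})` for every `β < α`. Multiplying an integrable `O(e^{βx})` function by `e^{-θx}`
with `θ < β` keeps it integrable: at `-∞` it becomes `O(e^{(β-θ)x})`, and at `+∞` we have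
`e^{-θx} ≤ 1`. This applies to `f`, `f'` and `x f x`, and `(e^{-θx} f)' = -θ e^{-θx} f + e^{-θx} f'`.
-/

open MeasureTheory Filter Set Asymptotics

lemma isBigO_exp_mul_of_tendsto_exp_neg_mul_mul {α : ℝ} {g : ℝ → ℝ} {l : Filter ℝ}
    (h : Tendsto (fun x => Real.exp (-α * x) * g x) l (nhds 0)) :
    g =O[l] fun x => Real.exp (α * x) := by
  refine ((isBigO_refl _ l).mul (h.isBigO_one ℝ)).congr (fun x => ?_) fun x => mul_one _
  rw [← mul_assoc, ← Real.exp_add, neg_mul, add_neg_cancel, Real.exp_zero, one_mul]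

lemma isBigO_exp_mul_of_hasDerivAt {α : ℝ} (hα : 0 < α) {g g' : ℝ → ℝ}
    (hderiv : ∀ x, HasDerivAt g (g' x) x) (hg' : Integrable g')
    (hlim : Tendsto g atBot (nhds 0)) (hO : g' =O[atBot] fun x => Real.exp (α * x)) :
    g =O[atBot] fun x => Real.exp (α * x) := by
  obtain ⟨C, hC⟩ := hO.bound
  obtain ⟨c, hc⟩ := eventually_atBot.1 hC
  refine IsBigO.of_bound (C / α) (eventually_atBot.2 ⟨c, fun x hx => ?_⟩)
  have hftc : ∫ t in Iic x, g' t = g x := by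
    simpa using integral_Iic_of_hasDerivAt_of_tendsto' (fun t _ => hderiv t) hg'.integrableOn hlim
  calc ‖g x‖ = ‖∫ t in Iic x, g' t‖ := by rw [hftc]
    _ ≤ ∫ t in Iic x, C * Real.exp (α * t) := by
        refine norm_integral_le_of_norm_le ((integrableOn_exp_mul_Iic hα x).const_mul C) ?_
        refine (ae_restrict_iff' measurableSet_Iic).2 (Eventually.of_forall fun t ht => ?_)
        simpa [Real.norm_eq_abs, abs_of_pos (Real.exp_pos _)] using hc t (ht.out.trans hx)
    _ = C / α * ‖Real.exp (α * x)‖ := by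
        rw [integral_const_mul, integral_exp_mul_Iic hα, Real.norm_of_nonneg (Real.exp_pos _).le]
        ring

lemma isBigO_id_exp_neg_mul_atBot {δ : ℝ} (hδ : 0 < δ) :
    (fun x : ℝ => x) =O[atBot] fun x => Real.exp (-δ * x) := by
  refine IsBigO.of_bound δ⁻¹ (eventually_atBot.2 ⟨0, fun x hx => ?_⟩)
  rw [Real.norm_eq_abs, abs_of_nonpos hx, Real.norm_of_nonneg (Real.exp_pos _).le,
    le_inv_mul_iff₀ hδ]
  linarith [Real.add_one_le_exp (-δ * x)]

lemma Asymptotics.IsBigO.id_mul_exp_mul_atBot {α β : ℝ} (hβα : β < α) {g : ℝ → ℝ}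
    (hg : g =O[atBot] fun x => Real.exp (α * x)) :
    (fun x => x * g x) =O[atBot] fun x => Real.exp (β * x) := by
  refine ((isBigO_id_exp_neg_mul_atBot (sub_pos.2 hβα)).mul hg).congr_right fun x => ?_
  rw [← Real.exp_add]
  ring_nf

lemma integrable_exp_neg_mul_mul_of_isBigO {θ β : ℝ} (hθ : 0 ≤ θ) (hθβ : θ < β) {g : ℝ → ℝ}
    (hg : Integrable g) (hO : g =O[atBot] fun x => Real.exp (β * x)) :
    Integrable fun x => Real.exp (-θ * x) * g x := by
  have hexp_top : (fun x => Real.exp (-θ * x)) =O[atTop] fun _ => (1 : ℝ) := by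
    refine IsBigO.of_bound 1 (eventually_atTop.2 ⟨0, fun x hx => ?_⟩)
    rw [Real.norm_of_nonneg (Real.exp_pos _).le, norm_one, one_mul, Real.exp_le_one_iff]
    nlinarith
  refine (hg.locallyIntegrable.continuous_mul (by fun_prop)).integrable_of_isBigO_atBot_atTop
    ((isBigO_refl _ _).mul hO) ⟨Iic 0, Iic_mem_atBot 0, ?_⟩
    (hexp_top.mul (isBigO_refl g atTop)) ((hg.const_mul 1).integrableAtFilter atTop)
  refine (integrableOn_exp_mul_Iic (sub_pos.2 hθβ) 0).congr_fun (fun x _ => ?_) measurableSet_Iic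
  rw [← Real.exp_add]
  ring_nf

lemma deriv_exp_mul_mul {c : ℝ} {f : ℝ → ℝ} (hf : Differentiable ℝ f) :
    deriv (fun x => Real.exp (c * x) * f x) =
      fun x => c * (Real.exp (c * x) * f x) + Real.exp (c * x) * deriv f x := by
  ext x
  have hexp : HasDerivAt (fun x => Real.exp (c * x)) (Real.exp (c * x) * c) x := by
    simpa using ((hasDerivAt_id x).const_mul c).exp
  rw [(hexp.fun_mul (hf x).hasDerivAt).deriv]
  ring

/-- if `f` is `C¹` with `f`, `f'`, `x·f(x)` integrable and `f'`
(left) exponential of order `α`, then for `0 < θ < α` the functions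
`e^{-θx} f`, `(e^{-θx} f)'` and `x e^{-θx} f` are integrable. -/
theorem stmt8 (f : ℝ → ℝ) (α θ : ℝ) (hθ : 0 < θ) (hθα : θ < α)
    (hf : ContDiff ℝ 1 f)
    (hfint : Integrable f) (hf'int : Integrable (deriv f))
    (hxf : Integrable (fun x => x * f x))
    (hexp : Tendsto (fun x => Real.exp (-α * x) * deriv f x) atBot (nhds 0)) :
    Integrable (fun x => Real.exp (-θ * x) * f x) ∧
    Integrable (deriv fun x => Real.exp (-θ * x) * f x) ∧
    Integrable (fun x => x * (Real.exp (-θ * x) * f x)) := by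
  have hdiff : Differentiable ℝ f := hf.differentiable one_ne_zero
  have hderiv : ∀ x, HasDerivAt f (deriv f x) x := fun x => (hdiff x).hasDerivAt
  have hf'O := isBigO_exp_mul_of_tendsto_exp_neg_mul_mul hexp
  have hfO : f =O[atBot] fun x => Real.exp (α * x) :=
    isBigO_exp_mul_of_hasDerivAt (hθ.trans hθα) hderiv hf'int
      (tendsto_zero_of_hasDerivAt_of_integrableOn_Iic (a := 0) (fun x _ => hderiv x)
        hf'int.integrableOn hfint.integrableOn) hf'O
  have hexpf := integrable_exp_neg_mul_mul_of_isBigO hθ.le hθα hfint hfO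
  refine ⟨hexpf, ?_, ?_⟩
  · rw [deriv_exp_mul_mul hdiff]
    exact (hexpf.const_mul _).add (integrable_exp_neg_mul_mul_of_isBigO hθ.le hθα hf'int hf'O)
  · have hβα : (θ + α) / 2 < α := by linarith
    simpa only [mul_left_comm] using integrable_exp_neg_mul_mul_of_isBigO hθ.le
      (by linarith : θ < (θ + α) / 2) hxf (hfO.id_mul_exp_mul_atBot hβα)
end

section
/- Let x_n be a time-homogeneous Markov chain on a compact metric measure space M with transition density p(x,y) bounded below by m₀ > 0 with respect to a reference measure, and let h : M × M → ℝ be uniformly continuous. Define S_n = Σ_{j=1}^n h(x_{j−1}, x_j) and B_n = sup over paths of Σ h(x_{j−1},x_j). If a < B := lim B_n/n, then for every n there exist δ > 0 and a realization such that P(S_n ≥ a·n) ≥ μ(B(x₀,δ)) · m₀^n · vol(B_δ)^n > 0; in particular P(S_n ≥ an) > 0 for all n, so the rate function value −lim (1/n) log P(S_n ≥ an) is finite. -/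
/-!
A path `x` with `∑ h(x_{j-1}, x_j) > a n` exists since `a n < B_n`. The path sum is continuous, so
every path in a small sup-ball around `x` still has sum `≥ a n`. That ball is a box of `δ`-balls, and
the chain gives it probability at least `μ(B(x₀, δ)) · m₀ⁿ · vol(B_δ)ⁿ`, because the transition density
is `≥ m₀` and, by compactness, every `δ`-ball has measure at least some `v > 0`.
-/

open MeasureTheory Set Metric
open scoped ENNReal

section

variable {M : Type*}

lemma exists_pos_forall_le_measure_ball [PseudoMetricSpace M] [CompactSpace M]
    [MeasurableSpace M] (vol : Measure M) [vol.IsOpenPosMeasure] {δ : ℝ} (hδ : 0 < δ) :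
    ∃ v : ℝ≥0∞, 0 < v ∧ ∀ x : M, v ≤ vol (ball x δ) := by
  obtain ⟨s, hs⟩ := isCompact_univ.elim_finite_subcover (fun c : M => ball c (δ / 2))
    (fun _ => isOpen_ball) fun x _ => mem_iUnion.2 ⟨x, mem_ball_self (half_pos hδ)⟩
  refine ⟨s.inf fun c => vol (ball c (δ / 2)), ?_, fun x => ?_⟩
  · exact (Finset.lt_inf_iff ENNReal.zero_lt_top).2 fun c _ => measure_ball_pos vol c (half_pos hδ)
  · obtain ⟨c, hc, hxc⟩ := mem_iUnion₂.1 (hs (mem_univ x))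
    refine (Finset.inf_le hc).trans (measure_mono (ball_subset_ball' ?_))
    rw [dist_comm]
    linarith [mem_ball.1 hxc]

lemma ENNReal.ofReal_pow_card_le_ofReal_prod {ι : Type*} [Fintype ι] {f : ι → ℝ} {m : ℝ}
    (hm : 0 ≤ m) (hf : ∀ i, m ≤ f i) :
    ENNReal.ofReal m ^ Fintype.card ι ≤ ENNReal.ofReal (∏ i, f i) := by
  rw [ENNReal.ofReal_prod_of_nonneg fun i _ => hm.trans (hf i)]
  exact Finset.pow_card_le_prod _ _ _ fun i _ => ENNReal.ofReal_le_ofReal (hf i)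

def pathSum {n : ℕ} (h : M → M → ℝ) (z : Fin (n + 1) → M) : ℝ :=
  ∑ j : Fin n, h (z j.castSucc) (z j.succ)

lemma isOpen_setOf_lt_pathSum [TopologicalSpace M] {h : M → M → ℝ}
    (hh : Continuous fun q : M × M => h q.1 q.2) (n : ℕ) (c : ℝ) :
    IsOpen {z : Fin (n + 1) → M | c < pathSum h z} :=
  isOpen_lt continuous_const <| continuous_finsetSum _ fun j _ =>
    hh.comp' (f := fun z : Fin (n + 1) → M => (z j.castSucc, z j.succ)) (by fun_prop)

/-- The law of `(x₀, (x₁, …, xₙ))` for the chain with initial law `μ` and transition density `p`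
with respect to `vol`. -/
noncomputable def pathMeasure [MeasurableSpace M] (μ vol : Measure M) (p : M → M → ℝ) (n : ℕ) :
    Measure (M × (Fin n → M)) :=
  (μ.prod (Measure.pi fun _ : Fin n => vol)).withDensity fun y =>
    ENNReal.ofReal (∏ j : Fin n,
      p (Matrix.vecCons y.1 y.2 j.castSucc) (Matrix.vecCons y.1 y.2 j.succ))

lemma vecCons_mem_ball {n : ℕ} [PseudoMetricSpace M] {x : Fin (n + 1) → M} {δ : ℝ} (hδ : 0 < δ)
    {y : M × (Fin n → M)} (hy : y ∈ ball (x 0) δ ×ˢ univ.pi fun j : Fin n => ball (x j.succ) δ) :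
    Matrix.vecCons y.1 y.2 ∈ ball x δ := by
  rw [ball_pi x hδ]
  intro k _
  cases k using Fin.cases with
  | zero => simpa using hy.1
  | succ j => simpa using hy.2 j (mem_univ j)

lemma mul_pow_le_pathMeasure_of_ball_subset [PseudoMetricSpace M] [MeasurableSpace M]
    (μ vol : Measure M) [SigmaFinite vol] {p : M → M → ℝ} {m₀ : ℝ} (hm₀ : 0 ≤ m₀)
    (hp : ∀ x y, m₀ ≤ p x y) {n : ℕ} {x : Fin (n + 1) → M} {δ : ℝ} (hδ : 0 < δ) {v : ℝ≥0∞}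
    (hv : ∀ y, v ≤ vol (ball y δ)) {S : Set (Fin (n + 1) → M)} (hS : ball x δ ⊆ S) :
    μ (ball (x 0) δ) * ENNReal.ofReal m₀ ^ n * v ^ n ≤
      pathMeasure μ vol p n {y | Matrix.vecCons y.1 y.2 ∈ S} := by
  set Q := ball (x 0) δ ×ˢ univ.pi fun j : Fin n => ball (x j.succ) δ
  have hvQ : μ (ball (x 0) δ) * v ^ n ≤ (μ.prod (Measure.pi fun _ : Fin n => vol)) Q := by
    rw [Measure.prod_prod, Measure.pi_pi]
    gcongr
    simpa using Finset.pow_card_le_prod Finset.univ _ v fun (j : Fin n) _ => hv (x j.succ)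
  calc μ (ball (x 0) δ) * ENNReal.ofReal m₀ ^ n * v ^ n
      ≤ ENNReal.ofReal m₀ ^ n * (μ.prod (Measure.pi fun _ : Fin n => vol)) Q := by
        rw [mul_right_comm, mul_comm]
        exact mul_le_mul_right hvQ _
    _ = ∫⁻ _ in Q, ENNReal.ofReal m₀ ^ n ∂(μ.prod (Measure.pi fun _ : Fin n => vol)) :=
        (setLIntegral_const _ _).symm
    _ ≤ pathMeasure μ vol p n Q := by
        refine le_trans (lintegral_mono fun y => ?_) (withDensity_apply_le _ _)
        simpa using ENNReal.ofReal_pow_card_le_ofReal_prod hm₀ fun j : Fin n => hp _ _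
    _ ≤ pathMeasure μ vol p n {y | Matrix.vecCons y.1 y.2 ∈ S} :=
        measure_mono fun y hy => hS (vecCons_mem_ball hδ hy)

end

theorem stmt12_general {M : Type*} [MetricSpace M] [CompactSpace M] [Nonempty M]
    [MeasurableSpace M]
    (vol : Measure M) [IsFiniteMeasure vol] [vol.IsOpenPosMeasure]
    (μ : Measure M) [μ.IsOpenPosMeasure]
    (p : M → M → ℝ)
    (m₀ : ℝ) (hm₀ : 0 < m₀) (hplb : ∀ x y : M, m₀ ≤ p x y)
    (h : M → M → ℝ) (hucont : UniformContinuous fun q : M × M => h q.1 q.2)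
    (a : ℝ)
    (ha : ∀ n : ℕ, 0 < n →
      a < (sSup {t : ℝ | ∃ x : Fin (n + 1) → M,
          t = ∑ j : Fin n, h (x j.castSucc) (x j.succ)}) / n) :
    ∀ n : ℕ, 0 < n →
      ∃ δ > (0 : ℝ), ∃ x₀ : M, ∃ v : ENNReal, 0 < v ∧
        (∀ x : M, v ≤ vol (Metric.ball x δ)) ∧
        μ (Metric.ball x₀ δ) * (ENNReal.ofReal m₀) ^ n * v ^ n ≤
          ((μ.prod (Measure.pi fun _ : Fin n => vol)).withDensity fun y =>
              ENNReal.ofReal (∏ j : Fin n,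
                p (Matrix.vecCons y.1 y.2 j.castSucc) (Matrix.vecCons y.1 y.2 j.succ)))
            {y : M × (Fin n → M) |
              a * n ≤ ∑ j : Fin n,
                h (Matrix.vecCons y.1 y.2 j.castSucc) (Matrix.vecCons y.1 y.2 j.succ)} ∧
        0 < ((μ.prod (Measure.pi fun _ : Fin n => vol)).withDensity fun y =>
              ENNReal.ofReal (∏ j : Fin n,
                p (Matrix.vecCons y.1 y.2 j.castSucc) (Matrix.vecCons y.1 y.2 j.succ)))
            {y : M × (Fin n → M) |
              a * n ≤ ∑ j : Fin n,
                h (Matrix.vecCons y.1 y.2 j.castSucc) (Matrix.vecCons y.1 y.2 j.succ)} := by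
  intro n hn
  have hsup := (lt_div_iff₀ (Nat.cast_pos.2 hn)).1 (ha n hn)
  obtain ⟨_, ⟨x, rfl⟩, hx⟩ := exists_lt_of_lt_csSup
    (by exact ⟨_, fun _ => Classical.arbitrary M, rfl⟩) hsup
  obtain ⟨δ, hδ, hball⟩ :=
    isOpen_iff.1 (isOpen_setOf_lt_pathSum hucont.continuous n (a * n)) x hx
  obtain ⟨v, hv, hvol⟩ := exists_pos_forall_le_measure_ball vol hδ
  have hbound := mul_pow_le_pathMeasure_of_ball_subset μ vol hm₀.le hplb hδ hvol
    (S := {z | a * n ≤ pathSum h z}) (hball.trans fun z (hz : a * n < pathSum h z) => hz.le)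
  refine ⟨δ, hδ, x 0, v, hv, hvol, hbound, lt_of_lt_of_le ?_ hbound⟩
  have hm₀' : ENNReal.ofReal m₀ ≠ 0 := (ENNReal.ofReal_pos.2 hm₀).ne'
  exact ENNReal.mul_pos (mul_ne_zero (measure_ball_pos μ _ hδ).ne' (pow_ne_zero n hm₀'))
    (pow_ne_zero n hv.ne')

/-- for a Markov chain on a compact metric measure space with
transition density `p ≥ m₀ > 0` (w.r.t. a reference measure `vol` of full
support), initial distribution `μ` of full support, and uniformly continuous
`h`, if `a < B_n / n` for all `n` (i.e. `a < B = lim B_n / n`), then for every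
`n ≥ 1` the probability of the path event `{S_n ≥ a n}` under the path measure
is bounded below by `μ(B(x₀,δ)) · m₀ⁿ · vol(B_δ)ⁿ > 0`; in particular it is
positive, so the large-deviation rate is finite. -/
theorem stmt12 {M : Type*} [MetricSpace M] [CompactSpace M] [Nonempty M]
    [MeasurableSpace M] [BorelSpace M]
    (vol : Measure M) [IsFiniteMeasure vol] [vol.IsOpenPosMeasure]
    (μ : Measure M) [IsProbabilityMeasure μ] [μ.IsOpenPosMeasure]
    (p : M → M → ℝ) (hpcont : Continuous fun q : M × M => p q.1 q.2)
    (m₀ : ℝ) (hm₀ : 0 < m₀) (hplb : ∀ x y : M, m₀ ≤ p x y)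
    (h : M → M → ℝ) (hucont : UniformContinuous fun q : M × M => h q.1 q.2)
    (a : ℝ)
    (ha : ∀ n : ℕ, 0 < n →
      a < (sSup {t : ℝ | ∃ x : Fin (n + 1) → M,
          t = ∑ j : Fin n, h (x j.castSucc) (x j.succ)}) / n) :
    ∀ n : ℕ, 0 < n →
      ∃ δ > (0 : ℝ), ∃ x₀ : M, ∃ v : ENNReal, 0 < v ∧
        (∀ x : M, v ≤ vol (Metric.ball x δ)) ∧
        μ (Metric.ball x₀ δ) * (ENNReal.ofReal m₀) ^ n * v ^ n ≤
          ((μ.prod (Measure.pi fun _ : Fin n => vol)).withDensity fun y =>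
              ENNReal.ofReal (∏ j : Fin n,
                p (Matrix.vecCons y.1 y.2 j.castSucc) (Matrix.vecCons y.1 y.2 j.succ)))
            {y : M × (Fin n → M) |
              a * n ≤ ∑ j : Fin n,
                h (Matrix.vecCons y.1 y.2 j.castSucc) (Matrix.vecCons y.1 y.2 j.succ)} ∧
        0 < ((μ.prod (Measure.pi fun _ : Fin n => vol)).withDensity fun y =>
              ENNReal.ofReal (∏ j : Fin n,
                p (Matrix.vecCons y.1 y.2 j.castSucc) (Matrix.vecCons y.1 y.2 j.succ)))
            {y : M × (Fin n → M) |
              a * n ≤ ∑ j : Fin n,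
                h (Matrix.vecCons y.1 y.2 j.castSucc) (Matrix.vecCons y.1 y.2 j.succ)} :=
  stmt12_general vol μ p m₀ hm₀ hplb h hucont a ha
end

section
/- Suppose operators satisfy ‖ℒⁿ_{θ+is}‖ ≤ λ(θ)ⁿ/n^{r₂} for all n > N₀ and all K ≤ |s| ≤ n^{r₁}, with λ(θ) > 0. Then for every ε ∈ (0, r₁) and every target exponent R > 0, there exist an N₁ and constants such that ‖ℒⁿ_{θ+is}‖ ≤ λ(θ)ⁿ/n^{R} for all sufficiently large n and all K ≤ |s| ≤ n^{r₁−ε}. That is, by slightly reducing the range exponent r₁, the polynomial decay rate r₂ can be boosted to be arbitrarily large. -/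
/-!
Write `n = m k + j` with `0 ≤ j < m` and block length `m = ⌈n ^ δ⌉`, `δ = (r₁ - ε) / r₁`, so that
`|s| ≤ n ^ (r₁ - ε) ≤ m ^ r₁`. Splitting `ℒⁿ` into `k - 1` blocks of length `m` and one of length
`m + j` (the remainder alone may be too short for the hypothesis), submultiplicativity gives
`‖ℒⁿ‖ ≤ λⁿ / m ^ (r₂ k)`. Since `k ≈ n ^ (1 - δ)` is unbounded, `m ^ (r₂ k) ≥ n ^ (δ r₂ k)` beats
any fixed power `n ^ R`.
-/

open Filter Real

section Blocks

variable {A : Type*} [NormedRing A] {a : A} {μ X : ℝ} {m : ℕ}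

theorem norm_pow_mul_add_le_of_forall_Ico
    (h : ∀ b, m ≤ b → b < 2 * m → ‖a ^ b‖ ≤ μ ^ b / X) {j : ℕ} (hj : j < m) :
    ∀ k, 1 ≤ k → ‖a ^ (m * k + j)‖ ≤ μ ^ (m * k + j) / X ^ k := by
  refine Nat.le_induction (by simpa using h (m + j) (by omega) (by omega)) fun k _ ih => ?_
  have hm := h m le_rfl (by omega)
  calc ‖a ^ (m * (k + 1) + j)‖ = ‖a ^ m * a ^ (m * k + j)‖ := by
        rw [← pow_add]; ring_nf
    _ ≤ ‖a ^ m‖ * ‖a ^ (m * k + j)‖ := norm_mul_le _ _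
    _ ≤ μ ^ m / X * (μ ^ (m * k + j) / X ^ k) :=
        mul_le_mul hm ih (norm_nonneg _) ((norm_nonneg _).trans hm)
    _ = μ ^ (m * (k + 1) + j) / X ^ (k + 1) := by
        rw [div_mul_div_comm, ← pow_add, pow_succ']; ring_nf

theorem norm_pow_le_of_forall_Ico
    (h : ∀ b, m ≤ b → b < 2 * m → ‖a ^ b‖ ≤ μ ^ b / X) (hm : 0 < m) {n : ℕ} (hmn : m ≤ n) :
    ‖a ^ n‖ ≤ μ ^ n / X ^ (n / m) := by
  have hk : 1 ≤ n / m := (Nat.le_div_iff_mul_le hm).2 (by simpa using hmn)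
  simpa only [Nat.div_add_mod] using
    norm_pow_mul_add_le_of_forall_Ico h (Nat.mod_lt n hm) (n / m) hk

end Blocks

section BlockLength

variable {δ : ℝ}

theorem eventually_lt_ceil_rpow (hδ : 0 < δ) (N : ℕ) :
    ∀ᶠ n : ℕ in atTop, N < ⌈(n : ℝ) ^ δ⌉₊ :=
  (tendsto_natCast_atTop_atTop.eventually ((tendsto_rpow_atTop hδ).eventually_gt_atTop (N : ℝ))).mono
    fun _ hn => by exact_mod_cast hn.trans_le (Nat.le_ceil _)

theorem eventually_ceil_rpow_le (hδ : δ ≤ 1) : ∀ᶠ n : ℕ in atTop, ⌈(n : ℝ) ^ δ⌉₊ ≤ n :=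
  (eventually_ge_atTop 1).mono fun _ hn =>
    Nat.ceil_le.2 (rpow_le_self_of_one_le (by exact_mod_cast hn) hδ)

theorem eventually_mul_ceil_rpow_le (hδ₀ : 0 ≤ δ) (hδ : δ < 1) (C : ℕ) :
    ∀ᶠ n : ℕ in atTop, C * ⌈(n : ℝ) ^ δ⌉₊ ≤ n := by
  have hgrowth : ∀ᶠ x : ℝ in atTop, 2 * (C : ℝ) ≤ x ^ (1 - δ) :=
    (tendsto_rpow_atTop (by linarith)).eventually_ge_atTop _
  filter_upwards [tendsto_natCast_atTop_atTop.eventually hgrowth, eventually_ge_atTop 1]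
    with n hn hn1
  have hn1 : (1 : ℝ) ≤ n := by exact_mod_cast hn1
  have hδn : (1 : ℝ) ≤ (n : ℝ) ^ δ := one_le_rpow hn1 hδ₀
  have : (C : ℝ) * ⌈(n : ℝ) ^ δ⌉₊ ≤ n :=
    calc (C : ℝ) * ⌈(n : ℝ) ^ δ⌉₊ ≤ C * ((n : ℝ) ^ δ + 1) := by
          gcongr; exact (Nat.ceil_lt_add_one (by positivity)).le
      _ ≤ 2 * C * (n : ℝ) ^ δ := by nlinarith
      _ ≤ (n : ℝ) ^ (1 - δ) * (n : ℝ) ^ δ := by gcongr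
      _ = n := by rw [← rpow_add (by positivity)]; simp
  exact_mod_cast this

theorem eventually_rpow_le_ceil_rpow_pow_div (hδ₀ : 0 < δ) (hδ : δ < 1) {r : ℝ} (hr : 0 < r)
    (R : ℝ) : ∀ᶠ n : ℕ in atTop,
      (n : ℝ) ^ R ≤ ((⌈(n : ℝ) ^ δ⌉₊ : ℝ) ^ r) ^ (n / ⌈(n : ℝ) ^ δ⌉₊) := by
  obtain ⟨C, hC⟩ := exists_nat_gt (R / (r * δ))
  filter_upwards [eventually_mul_ceil_rpow_le hδ₀.le hδ C, eventually_ge_atTop 1]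
    with n hCm hn1
  have hn1 : (1 : ℝ) ≤ n := by exact_mod_cast hn1
  set m := ⌈(n : ℝ) ^ δ⌉₊
  have hm : (n : ℝ) ^ δ ≤ m := Nat.le_ceil _
  have hm1 : (1 : ℝ) ≤ m := (one_le_rpow hn1 hδ₀.le).trans hm
  have hCk : C ≤ n / m := (Nat.le_div_iff_mul_le (by exact_mod_cast hm1)).2 (by linarith)
  calc (n : ℝ) ^ R ≤ (n : ℝ) ^ (δ * (r * C)) := by
        refine rpow_le_rpow_of_exponent_le hn1 ?_
        have := (div_lt_iff₀ (by positivity)).1 hC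
        linarith
    _ = (((n : ℝ) ^ δ) ^ r) ^ C := by
        rw [rpow_mul (by positivity), rpow_mul (by positivity), rpow_natCast]
    _ ≤ ((m : ℝ) ^ r) ^ C := by gcongr
    _ ≤ ((m : ℝ) ^ r) ^ (n / m) := pow_le_pow_right₀ (one_le_rpow hm1 hr.le) hCk

end BlockLength

theorem stmt17_general {A : Type*} [NormedRing A]
    (L : ℝ → A) (lamθ K r₁ r₂ : ℝ) (N₀ : ℕ)
    (hlam : 0 < lamθ) (hr₁ : 0 < r₁) (hr₂ : 0 < r₂)
    (hyp : ∀ n : ℕ, N₀ < n → ∀ s : ℝ, K ≤ |s| → |s| ≤ (n : ℝ) ^ r₁ →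
      ‖L s ^ n‖ ≤ lamθ ^ n / (n : ℝ) ^ r₂) :
    ∀ ε : ℝ, 0 < ε → ε < r₁ → ∀ R : ℝ, 0 < R →
      ∃ N₁ : ℕ, ∀ n : ℕ, N₁ ≤ n → ∀ s : ℝ, K ≤ |s| → |s| ≤ (n : ℝ) ^ (r₁ - ε) →
        ‖L s ^ n‖ ≤ lamθ ^ n / (n : ℝ) ^ R := by
  intro ε hε hεr₁ R _
  set δ := (r₁ - ε) / r₁
  have hδ₀ : 0 < δ := div_pos (by linarith) hr₁
  have hδ : δ < 1 := (div_lt_one hr₁).2 (by linarith)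
  obtain ⟨N₁, hN₁⟩ := eventually_atTop.1 <|
    (eventually_lt_ceil_rpow hδ₀ N₀).and <| (eventually_ceil_rpow_le hδ.le).and <|
      eventually_rpow_le_ceil_rpow_pow_div hδ₀ hδ hr₂ R
  refine ⟨N₁, fun n hn s hKs hs => ?_⟩
  obtain ⟨hN₀m, hmn, hdecay⟩ := hN₁ n hn
  set m := ⌈(n : ℝ) ^ δ⌉₊
  have hsm : |s| ≤ (m : ℝ) ^ r₁ :=
    calc |s| ≤ (n : ℝ) ^ (r₁ - ε) := hs
      _ = ((n : ℝ) ^ δ) ^ r₁ := by rw [← rpow_mul (by positivity), div_mul_cancel₀ _ hr₁.ne']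
      _ ≤ (m : ℝ) ^ r₁ := by gcongr; exact Nat.le_ceil _
  have hblock : ∀ b, m ≤ b → b < 2 * m → ‖L s ^ b‖ ≤ lamθ ^ b / (m : ℝ) ^ r₂ := by
    intro b hmb _
    have hmb' : (m : ℝ) ≤ b := by exact_mod_cast hmb
    calc ‖L s ^ b‖ ≤ lamθ ^ b / (b : ℝ) ^ r₂ :=
          hyp b (by omega) s hKs (hsm.trans (by gcongr))
      _ ≤ lamθ ^ b / (m : ℝ) ^ r₂ := by
          gcongr
          exact rpow_pos_of_pos (by exact_mod_cast (by omega : 0 < m)) r₂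
  calc ‖L s ^ n‖ ≤ lamθ ^ n / ((m : ℝ) ^ r₂) ^ (n / m) :=
        norm_pow_le_of_forall_Ico hblock (by omega) hmn
    _ ≤ lamθ ^ n / (n : ℝ) ^ R := by
        gcongr
        exact rpow_pos_of_pos (by exact_mod_cast (by omega : 0 < n)) R

/-- if `‖L(s)ⁿ‖ ≤ λ(θ)ⁿ / n^{r₂}` for all `n > N₀` and
`K ≤ |s| ≤ n^{r₁}`, then for every `ε ∈ (0, r₁)` and every target exponent
`R > 0` there is `N₁` such that `‖L(s)ⁿ‖ ≤ λ(θ)ⁿ / n^R` for all `n ≥ N₁` and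
`K ≤ |s| ≤ n^{r₁ - ε}`: slightly shrinking the range boosts the polynomial
decay arbitrarily. -/
theorem stmt17 {A : Type*} [NormedRing A] [NormOneClass A]
    (L : ℝ → A) (lamθ K r₁ r₂ : ℝ) (N₀ : ℕ)
    (hlam : 0 < lamθ) (hK : 1 ≤ K) (hr₁ : 0 < r₁) (hr₂ : 0 < r₂)
    (hyp : ∀ n : ℕ, N₀ < n → ∀ s : ℝ, K ≤ |s| → |s| ≤ (n : ℝ) ^ r₁ →
      ‖L s ^ n‖ ≤ lamθ ^ n / (n : ℝ) ^ r₂) :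
    ∀ ε : ℝ, 0 < ε → ε < r₁ → ∀ R : ℝ, 0 < R →
      ∃ N₁ : ℕ, ∀ n : ℕ, N₁ ≤ n → ∀ s : ℝ, K ≤ |s| → |s| ≤ (n : ℝ) ^ (r₁ - ε) →
        ‖L s ^ n‖ ≤ lamθ ^ n / (n : ℝ) ^ R :=
  stmt17_general L lamθ K r₁ r₂ N₀ hlam hr₁ hr₂ hyp
end
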